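/- arXiv:2211.11142 — 2 statements merged into one kernel-verified Lean document; each statement's English description precedes it below -/
import Mathlib

section
/- Let G be a finite simple graph with vertices u, v, w such that vw ∈ E(G), uw ∉ E(G), u ≠ w, u ≠ v, and deg_G(u) ≥ deg_G(v). Let G' = G − {vw} + {uw}. Then the non-increasing degree sequence of G is majorized by that of G', and the two degree sequences are not equal. -/
/-!
Rotating the edge `vw` to `uw` moves one unit of degree from `v` to `u`: the degree functions
satisfy `d' + 𝟙ᵥ = d + 𝟙ᵤ`. The sum of the `k` largest entries of a sequence is the largest
sum of at most `k` of its entries, so majorization follows once every vertex set `S` admits a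
set `T`, no larger, with `∑_S d ≤ ∑_T d'`. Take `T = S`, except when `v ∈ S` and `u ∉ S`; then
exchange `v` for `u`, which changes the sum by `d u + 1 - d v > 0`. The sequences differ
because `d'` takes the value `d u + 1` at one more vertex than `d` does.
-/

open Finset

theorem List.Pairwise.sum_le_sum_take {α : Type*} [AddCommMonoid α] [LinearOrder α]
    [IsOrderedAddMonoid α] [CanonicallyOrderedAdd α] {l : List α} (hl : l.Pairwise (· ≥ ·))
    {X : Multiset α} (hX : X ≤ l) {k : ℕ} (hk : Multiset.card X ≤ k) :
    X.sum ≤ (l.take k).sum := by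
  induction l generalizing X k with
  | nil => simp [Multiset.le_zero.1 (by simpa using hX)]
  | cons a l ih =>
    obtain ⟨ha, hl⟩ := List.pairwise_cons.1 hl
    cases k with
    | zero => simp [Multiset.card_eq_zero.1 (Nat.le_zero.1 hk)]
    | succ k =>
      rw [List.take_succ_cons, List.sum_cons]
      by_cases haX : a ∈ X
      · rw [← Multiset.cons_erase haX] at hX hk ⊢
        rw [Multiset.card_cons] at hk
        rw [Multiset.sum_cons]
        exact add_le_add_right
          (ih hl ((Multiset.cons_le_cons_iff a).1 hX) (k := k) (by omega)) a
      · calc X.sum ≤ (l.take (k + 1)).sum := ih hl ((Multiset.le_cons_of_notMem haX).1 hX) hk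
          _ ≤ a + (l.take k).sum := by
            rcases lt_or_ge k l.length with hkl | hkl
            · rw [List.sum_take_succ _ _ hkl, add_comm]
              exact add_le_add_left (ha _ (List.getElem_mem hkl)) _
            · rw [List.take_of_length_le hkl, List.take_of_length_le (by omega)]
              exact le_add_self

theorem Multiset.exists_le_map_eq {α β : Type*} {s : Multiset α} {f : α → β} {X : Multiset β}
    (h : X ≤ s.map f) : ∃ Y ≤ s, Y.map f = X := by
  induction s using Quotient.inductionOn with | _ l => ?_
  induction X using Quotient.inductionOn with | _ m => ?_
  obtain ⟨m', hm', hsub⟩ := Multiset.coe_le.1 h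
  obtain ⟨l', hl', rfl⟩ := List.sublist_map_iff.1 hsub
  exact ⟨l', Multiset.coe_le.2 hl'.subperm, Multiset.coe_eq_coe.2 hm'⟩

namespace Finset

variable {ι : Type*}

theorem sum_take_sort_reverse_map_le {α : Type*} [AddCommMonoid α] [LinearOrder α]
    [IsOrderedAddMonoid α] [CanonicallyOrderedAdd α] {s : Finset ι} {f g : ι → α}
    (h : ∀ S ⊆ s, ∃ T ⊆ s, #T ≤ #S ∧ ∑ x ∈ S, f x ≤ ∑ x ∈ T, g x) (k : ℕ) :
    (((s.val.map f).sort (· ≤ ·)).reverse.take k).sum ≤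
      (((s.val.map g).sort (· ≤ ·)).reverse.take k).sum := by
  set L := ((s.val.map f).sort (· ≤ ·)).reverse
  have hL : ((L.take k : List α) : Multiset α) ≤ s.val.map f := by
    calc ((L.take k : List α) : Multiset α) ≤ L := Multiset.coe_le.2 (L.take_sublist k).subperm
      _ = s.val.map f := by simp [L]
  obtain ⟨Y, hYs, hYf⟩ := Multiset.exists_le_map_eq hL
  let S : Finset ι := ⟨Y, Multiset.nodup_of_le hYs s.nodup⟩
  obtain ⟨T, hTs, hTS, hsum⟩ := h S fun x hx ↦ Multiset.mem_of_le hYs hx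
  have hTk : Multiset.card (T.val.map g) ≤ k := by
    calc Multiset.card (T.val.map g) ≤ Multiset.card Y := by rw [Multiset.card_map]; exact hTS
      _ ≤ k := by simp [← Multiset.card_map f Y, hYf]
  calc (L.take k).sum = ∑ x ∈ S, f x := by rw [← Multiset.sum_coe, ← hYf]; rfl
    _ ≤ ∑ x ∈ T, g x := hsum
    _ ≤ _ := by
      refine (List.pairwise_reverse.2 (Multiset.pairwise_sort _ _)).sum_le_sum_take ?_ hTk
      simpa using Multiset.map_le_map (val_le_iff.2 hTs)

variable [DecidableEq ι] {u v : ι}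

theorem sum_add_ite_eq_of_add_single_eq {M : Type*} [AddCommMonoid M] {d d' : ι → M} {c : M}
    (h : d' + Pi.single v c = d + Pi.single u c) (S : Finset ι) :
    ∑ x ∈ S, d' x + (if v ∈ S then c else 0) = ∑ x ∈ S, d x + (if u ∈ S then c else 0) := by
  simpa [sum_add_distrib, sum_pi_single'] using congrArg (fun f ↦ ∑ x ∈ S, f x) h

variable {d d' : ι → ℕ} {c : ℕ}

theorem exists_card_le_sum_le_of_add_single_eq (h : d' + Pi.single v c = d + Pi.single u c)
    (hdeg : d v ≤ d u + c) (S : Finset ι) :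
    ∃ T : Finset ι, #T ≤ #S ∧ ∑ x ∈ S, d x ≤ ∑ x ∈ T, d' x := by
  by_cases hvu : v ∈ S ∧ u ∉ S
  · refine ⟨insert u (S.erase v), (card_insert_le _ _).trans (card_erase_add_one hvu.1).le, ?_⟩
    have hu : u ∉ S.erase v := fun hu ↦ hvu.2 (mem_of_mem_erase hu)
    have hT := sum_add_ite_eq_of_add_single_eq h (insert u (S.erase v))
    rw [if_neg (by simp [hvu.1, ne_of_mem_of_not_mem hvu.1 hvu.2]),
      if_pos (mem_insert_self u _)] at hT
    have hTd : ∑ x ∈ insert u (S.erase v), d x = d u + ∑ x ∈ S.erase v, d x := sum_insert hu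
    have hSd := add_sum_erase S d hvu.1
    omega
  · refine ⟨S, le_rfl, ?_⟩
    have hS := sum_add_ite_eq_of_add_single_eq h S
    split_ifs at hS with hv hu <;> first | omega | exact absurd ⟨hv, hu⟩ hvu

theorem sum_eq_sum_of_add_single_eq {s : Finset ι} (hu : u ∈ s) (hv : v ∈ s)
    (h : d' + Pi.single v c = d + Pi.single u c) : ∑ x ∈ s, d' x = ∑ x ∈ s, d x := by
  simpa [hu, hv] using sum_add_ite_eq_of_add_single_eq h s

theorem map_ne_map_of_add_single_eq {s : Finset ι} (hu : u ∈ s) (huv : u ≠ v) (hc : 0 < c)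
    (h : d' + Pi.single v c = d + Pi.single u c) (hdeg : d v ≤ d u) :
    s.val.map d ≠ s.val.map d' := by
  have hpt (x : ι) : d' x + (if x = v then c else 0) = d x + (if x = u then c else 0) := by
    simpa [Pi.single_apply] using congrFun h x
  have hsub : s.filter (fun x ↦ d u + c = d x) ⊂ s.filter (fun x ↦ d u + c = d' x) := by
    refine (ssubset_iff_of_subset fun x hx ↦ ?_).2 ⟨u, ?_, ?_⟩
    · obtain ⟨hxs, hx⟩ := mem_filter.1 hx
      have hxu : x ≠ u := by rintro rfl; omega
      have hxv : x ≠ v := by rintro rfl; omega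
      exact mem_filter.2 ⟨hxs, by simpa [hxu, hxv, hx] using (hpt x).symm⟩
    · simpa [hu, huv] using (hpt u).symm
    · simp [hc.ne']
  intro heq
  have := congrArg (Multiset.count (d u + c)) heq
  simp only [Multiset.count_map, ← filter_val, card_val] at this
  exact (card_lt_card hsub).ne this

end Finset

namespace SimpleGraph
variable {V : Type*} (G : SimpleGraph V)

-- An `abbrev`, so that degrees in `G.rotateEdge u v w` use the decidability instance of
-- `fromEdgeSet`, as in the statement of the theorem.
abbrev rotateEdge (u v w : V) : SimpleGraph V :=
  fromEdgeSet ((G.edgeSet \ {s(v, w)}) ∪ {s(u, w)})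

variable {G} {u v w : V} [Fintype V] [DecidableRel G.Adj]

lemma neighborFinset_rotateEdge_left [DecidableEq V] (huv : u ≠ v) (huw : u ≠ w)
    [Fintype ((G.rotateEdge u v w).neighborSet u)] :
    (G.rotateEdge u v w).neighborFinset u = insert w (G.neighborFinset u) := by
  ext y
  aesop

lemma neighborFinset_rotateEdge_right [DecidableEq V] (huv : u ≠ v) (hvw : v ≠ w)
    [Fintype ((G.rotateEdge u v w).neighborSet v)] :
    (G.rotateEdge u v w).neighborFinset v = (G.neighborFinset v).erase w := by
  ext y
  aesop

lemma neighborFinset_rotateEdge_center [DecidableEq V] (huw : u ≠ w)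
    [Fintype ((G.rotateEdge u v w).neighborSet w)] :
    (G.rotateEdge u v w).neighborFinset w = insert u ((G.neighborFinset w).erase v) := by
  ext y
  aesop

lemma neighborFinset_rotateEdge_of_ne {x : V} (hxu : x ≠ u) (hxv : x ≠ v) (hxw : x ≠ w)
    [Fintype ((G.rotateEdge u v w).neighborSet x)] :
    (G.rotateEdge u v w).neighborFinset x = G.neighborFinset x := by
  ext y
  aesop

lemma degree_rotateEdge_left [DecidableEq V] (huv : u ≠ v) (huw : u ≠ w) (h : ¬G.Adj u w)
    [Fintype ((G.rotateEdge u v w).neighborSet u)] :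
    (G.rotateEdge u v w).degree u = G.degree u + 1 := by
  rw [← card_neighborFinset_eq_degree, neighborFinset_rotateEdge_left huv huw,
    card_insert_of_notMem (by simpa using h), card_neighborFinset_eq_degree]

lemma degree_rotateEdge_right [DecidableEq V] (huv : u ≠ v) (h : G.Adj v w)
    [Fintype ((G.rotateEdge u v w).neighborSet v)] :
    (G.rotateEdge u v w).degree v + 1 = G.degree v := by
  rw [← card_neighborFinset_eq_degree, neighborFinset_rotateEdge_right huv h.ne,
    card_erase_add_one (by simpa using h), card_neighborFinset_eq_degree]

lemma degree_rotateEdge_of_ne {x : V} (hxu : x ≠ u) (hxv : x ≠ v) (hvw : G.Adj v w)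
    (huw : ¬G.Adj u w) [Fintype ((G.rotateEdge u v w).neighborSet x)] :
    (G.rotateEdge u v w).degree x = G.degree x := by
  classical
  rw [← card_neighborFinset_eq_degree, ← card_neighborFinset_eq_degree]
  obtain rfl | hxw := eq_or_ne x w
  · have hu : u ∉ (G.neighborFinset x).erase v := fun h ↦
      huw ((G.mem_neighborFinset _ _).1 (mem_of_mem_erase h)).symm
    rw [neighborFinset_rotateEdge_center hxu.symm, card_insert_of_notMem hu,
      card_erase_add_one (by simpa using hvw.symm)]
  · rw [neighborFinset_rotateEdge_of_ne hxu hxv hxw]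

lemma degree_rotateEdge_add_single [DecidableEq V] (huv : u ≠ v) (huw : u ≠ w) (hvw : G.Adj v w)
    (hnuw : ¬G.Adj u w) [∀ x, Fintype ((G.rotateEdge u v w).neighborSet x)] :
    (fun x ↦ (G.rotateEdge u v w).degree x) + Pi.single v 1 =
      (fun x ↦ G.degree x) + Pi.single u 1 := by
  ext x
  obtain rfl | hxu := eq_or_ne x u
  · simp [degree_rotateEdge_left huv huw hnuw, huv]
  obtain rfl | hxv := eq_or_ne x v
  · simp [degree_rotateEdge_right huv hvw, hxu]
  · simp [degree_rotateEdge_of_ne hxu hxv hvw hnuw, hxu, hxv]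

end SimpleGraph

/-- Edge rotation: if `vw ∈ E(G)`, `uw ∉ E(G)` and `deg(u) ≥ deg(v)`, then the
non-increasing degree sequence of `G` is majorized by (and distinct from) that of
`G' = G - vw + uw`. -/
theorem stmt_2 {V : Type*} [Fintype V] [DecidableEq V]
    (G : SimpleGraph V) [DecidableRel G.Adj] (u v w : V)
    (hvw : G.Adj v w) (huw : ¬ G.Adj u w) (huw' : u ≠ w) (huv : u ≠ v)
    (hdeg : G.degree v ≤ G.degree u) :
    let G' : SimpleGraph V := SimpleGraph.fromEdgeSet ((G.edgeSet \ {s(v, w)}) ∪ {s(u, w)})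
    let πG : List ℕ := ((Finset.univ.val.map (fun x => G.degree x)).sort (· ≤ ·)).reverse
    let πG' : List ℕ := ((Finset.univ.val.map (fun x => G'.degree x)).sort (· ≤ ·)).reverse
    (∀ k, (πG.take k).sum ≤ (πG'.take k).sum) ∧ πG.sum = πG'.sum ∧ πG ≠ πG' := by
  intro G' πG πG'
  have hsingle : (fun x ↦ G'.degree x) + Pi.single v 1 = (fun x ↦ G.degree x) + Pi.single u 1 :=
    SimpleGraph.degree_rotateEdge_add_single huv huw' hvw huw
  refine ⟨sum_take_sort_reverse_map_le fun S _ ↦ ?_, ?_, ?_⟩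
  · obtain ⟨T, hTS, hsum⟩ :=
      exists_card_le_sum_le_of_add_single_eq hsingle (hdeg.trans (Nat.le_add_right _ _)) S
    exact ⟨T, subset_univ T, hTS, hsum⟩
  · simp only [πG, πG', ← Multiset.sum_coe, Multiset.coe_reverse, Multiset.sort_eq]
    exact (sum_eq_sum_of_add_single_eq (mem_univ u) (mem_univ v) hsingle).symm
  · intro hπ
    refine map_ne_map_of_add_single_eq (mem_univ u) huv one_pos hsingle hdeg ?_
    simpa [πG, πG'] using congrArg ((↑) : List ℕ → Multiset ℕ) hπ
end

section
/- Let 0 < α < 1, t ≥ 2, and n ≥ 3 + (t+1)/α be real numbers. Then (αn + √((αn)² + 8(n−2)(1−2α)))/2 > (t+1)α + (1−α)(t−1). In particular, (αn)² + 8(n−2)(1−2α) = (α(n−4))² + 8(1−α)²(n−2) ≥ 0 and the left-hand side exceeds α(n−2). -/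
/-- For `0 < α < 1`, `t ≥ 2` and `n ≥ 3 + (t+1)/α`, the `A_α`-spectral radius
`(αn + √((αn)² + 8(n-2)(1-2α)))/2` of `K_{2,n-2}` exceeds `(t+1)α + (1-α)(t-1)`;
moreover the radicand equals `(α(n-4))² + 8(1-α)²(n-2) ≥ 0`, and the radius
exceeds `α(n-2)`. -/
theorem stmt_12 (α t n : ℝ) (hα0 : 0 < α) (hα1 : α < 1) (ht : 2 ≤ t)
    (hn : 3 + (t + 1) / α ≤ n) :
    ((α * n) ^ 2 + 8 * (n - 2) * (1 - 2 * α)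
        = (α * (n - 4)) ^ 2 + 8 * (1 - α) ^ 2 * (n - 2)) ∧
    (0 ≤ (α * n) ^ 2 + 8 * (n - 2) * (1 - 2 * α)) ∧
    ((α * n + Real.sqrt ((α * n) ^ 2 + 8 * (n - 2) * (1 - 2 * α))) / 2
        > (t + 1) * α + (1 - α) * (t - 1)) ∧
    ((α * n + Real.sqrt ((α * n) ^ 2 + 8 * (n - 2) * (1 - 2 * α))) / 2
        > α * (n - 2)) := by
  have hd : α * ((t + 1) / α) = t + 1 := by field_simp
  have hn6 : 6 < n := by
    have h1 : t + 1 < (t + 1) / α := by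
      rw [lt_div_iff₀ hα0]; nlinarith
    linarith
  have hαn : t + 1 + 3 * α ≤ α * n := by nlinarith
  have heq : (α * n) ^ 2 + 8 * (n - 2) * (1 - 2 * α)
      = (α * (n - 4)) ^ 2 + 8 * (1 - α) ^ 2 * (n - 2) := by ring
  have hpos : (α * (n - 4)) ^ 2 < (α * n) ^ 2 + 8 * (n - 2) * (1 - 2 * α) := by
    rw [heq]; nlinarith [sq_nonneg (1 - α)]
  have hnn : 0 ≤ (α * n) ^ 2 + 8 * (n - 2) * (1 - 2 * α) :=
    le_trans (sq_nonneg _) hpos.le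
  have hsqrt : α * (n - 4) < Real.sqrt ((α * n) ^ 2 + 8 * (n - 2) * (1 - 2 * α)) := by
    rw [show α * (n - 4) = Real.sqrt ((α * (n - 4)) ^ 2) from
      (Real.sqrt_sq (by nlinarith)).symm]
    exact Real.sqrt_lt_sqrt (sq_nonneg _) hpos
  have h4 : (α * n + Real.sqrt ((α * n) ^ 2 + 8 * (n - 2) * (1 - 2 * α))) / 2
      > α * (n - 2) := by linarith
  exact ⟨heq, hnn, by nlinarith, h4⟩
end
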